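/- Let (λ₁, λ₂) be an interlacing pair of type D_n weights with λ₁(h_{n-1}) + λ₁(h_n) = λ₂(h_{n-1}) + λ₂(h_n) = 0. Let p = max{ i : λ₁(i) + λ₂(i) = 1 } and assume p exists, p ≤ n-2, and (λ₁+λ₂)(h_{p-1}) = 0. Then β_{p-1,p} ∈ R(λ₁,λ₂), β_{i,j} ∉ R(λ₁,λ₂) whenever j > p, and for any β_{i,j} ∈ R(λ₁,λ₂) with i ≤ p-2, j ≤ p one has β_{i,j} − β_{p-1,p} = α_{i,p-2} + α_{j,p-1} (interpreting α_{a,b} = 0 when a > b). -/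

import Mathlib

/-- The value `λ(h_a) + ⋯ + λ(h_b)` of a weight on a sum of consecutive simple coroots. -/
def hIcc (lam : ℕ → ℤ) (a b : ℕ) : ℤ := ∑ s ∈ Finset.Icc a b, lam s

/-- Pairing of a weight with the coroot of the type-A root `α_{i,j}` in type `D_n`
(`α_{i,n} = α_i + ⋯ + α_{n-2} + α_n`); zero if `i > j`. -/
def hA (n : ℕ) (lam : ℕ → ℤ) (i j : ℕ) : ℤ :=
  if j < i then 0 else if j = n then hIcc lam i (n - 2) + lam n else hIcc lam i j

/-- Pairing of a weight with the coroot of `β_{i,j}`: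
`λ(h_{β_{i,j}}) = λ(h_{i,n-1}) + λ(h_{j,n-2}) + λ(h_n)`. -/
def hBeta (n : ℕ) (lam : ℕ → ℤ) (i j : ℕ) : ℤ :=
  hIcc lam i (n - 1) + hIcc lam j (n - 2) + lam n

/-- An interlacing pair of type `D_n` weights (weights are `ℕ → ℤ`, with values on
indices `1,…,n`; nonnegativity and the conditions (a)–(c) are built in). -/
def Interlacing (n : ℕ) (l1 l2 : ℕ → ℤ) : Prop :=
  (∀ i, 1 ≤ i → i ≤ n → 0 ≤ l1 i ∧ 0 ≤ l2 i ∧ l1 i + l2 i ≤ 1) ∧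
  (0 < l1 (n - 1) + l1 n → l2 (n - 1) + l2 n = 0) ∧
  (0 < l2 (n - 1) + l2 n → l1 (n - 1) + l1 n = 0) ∧
  (∀ i j, 1 ≤ i → i < j → j ≤ n → ¬(i = n - 1 ∧ j = n) →
    (l1 i = 1 → l1 j = 1 → ∃ s, i < s ∧ s < j ∧ l2 s = 1) ∧
    (l2 i = 1 → l2 j = 1 → ∃ s, i < s ∧ s < j ∧ l1 s = 1))

/-- Coefficient function (on simple roots) of `α_{a,b} = α_a + ⋯ + α_b`; zero if `a > b`. -/
def alphaCoeff (a b k : ℕ) : ℤ := if a ≤ k ∧ k ≤ b then 1 else 0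

/-- Coefficient function of `β_{i,j} = α_i + ⋯ + α_{j-1} + 2(α_j + ⋯ + α_{n-2}) + α_{n-1} + α_n`. -/
def betaCoeff (n i j k : ℕ) : ℤ :=
  (if i ≤ k ∧ k ≤ j - 1 then 1 else 0) + 2 * (if j ≤ k ∧ k ≤ n - 2 then 1 else 0) +
    (if k = n - 1 ∨ k = n then 1 else 0)

/-! Because both weights vanish beyond `p`, `λ₁(h_{β_{i,j}}) − λ₂(h_{β_{i,j}}) = D(i) + D(j)` with
`D(a) = ∑_{a ≤ s ≤ p} (λ₁ − λ₂)(s)`. Interlacing says that the nonzero values of `λ₁ − λ₂` alternate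
in sign, so each `D(a)` equals `0` or the last nonzero value, and lies in `{-1, 0, 1}`. Hence the
difference is `±2` only if `D(i) = D(j) = ±1`: impossible for `j > p` since then `D(j) = 0`, and
true for `(p - 1, p)` since `(λ₁ − λ₂)(p - 1) = 0`. The root identity is a coefficient count. -/

open Finset

section Alternating

variable (d : ℕ → ℤ) {a b : ℕ}

theorem sum_Icc_eq_zero_or_eq_last_of_alternating (hd : ∀ s ∈ Icc a b, |d s| ≤ 1)
    (halt : ∀ i j, a ≤ i → i < j → j ≤ b → d i ≠ 0 → d j = d i →
      ∃ s, i < s ∧ s < j ∧ d s = -d i) :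
    ∑ s ∈ Icc a b, d s = 0 ∨
      ∃ t ∈ Icc a b, (∀ s ∈ Ioc t b, d s = 0) ∧ ∑ s ∈ Icc a b, d s = d t := by
  induction b with
  | zero =>
    rcases Nat.eq_zero_or_pos a with rfl | ha
    · exact Or.inr ⟨0, by simp, by simp, by simp⟩
    · simp [Icc_eq_empty_of_lt ha]
  | succ b ih =>
    rcases Nat.lt_or_ge (b + 1) a with hlt | hab
    · simp [Icc_eq_empty_of_lt hlt]
    have hsplit := sum_Icc_succ_top hab d
    have ih := ih (fun s hs => hd s (Icc_subset_Icc_right b.le_succ hs))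
      (fun i j hi hij hj => halt i j hi hij (by omega))
    by_cases hlast : d (b + 1) = 0
    · rcases ih with hzero | ⟨t, ht, hzeros, hsum⟩
      · exact Or.inl (by omega)
      refine Or.inr ⟨t, Icc_subset_Icc_right b.le_succ ht, fun s hs => ?_, by omega⟩
      rcases (mem_Ioc.mp hs).2.lt_or_eq with hsb | rfl
      · exact hzeros s (mem_Ioc.mpr ⟨(mem_Ioc.mp hs).1, by omega⟩)
      · exact hlast
    rcases ih with hzero | ⟨t, ht, hzeros, hsum⟩
    · exact Or.inr ⟨b + 1, mem_Icc.mpr ⟨hab, le_rfl⟩, by simp, by omega⟩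
    have hbd := abs_le.mp (hd (b + 1) (mem_Icc.mpr ⟨hab, le_rfl⟩))
    have htd := abs_le.mp (hd t (Icc_subset_Icc_right b.le_succ ht))
    rcases eq_or_ne (d t) 0 with ht0 | ht0
    · exact Or.inr ⟨b + 1, mem_Icc.mpr ⟨hab, le_rfl⟩, by simp, by omega⟩
    by_cases hsame : d (b + 1) = d t
    · -- two equal nonzero entries with only zeros between them break alternation
      obtain ⟨s, hts, hsb, hs⟩ :=
        halt t (b + 1) (mem_Icc.mp ht).1 (by have := (mem_Icc.mp ht).2; omega) le_rfl ht0 hsame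
      have := hzeros s (mem_Ioc.mpr ⟨hts, by omega⟩)
      omega
    · exact Or.inl (by omega)

theorem abs_sum_Icc_le_one_of_alternating (hd : ∀ s ∈ Icc a b, |d s| ≤ 1)
    (halt : ∀ i j, a ≤ i → i < j → j ≤ b → d i ≠ 0 → d j = d i →
      ∃ s, i < s ∧ s < j ∧ d s = -d i) :
    |∑ s ∈ Icc a b, d s| ≤ 1 := by
  rcases sum_Icc_eq_zero_or_eq_last_of_alternating d hd halt with h | ⟨t, ht, -, h⟩
  · simp [h]
  · exact h ▸ hd t ht

end Alternating

theorem hIcc_of_lt (lam : ℕ → ℤ) {a b : ℕ} (h : b < a) : hIcc lam a b = 0 := by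
  simp [hIcc, Icc_eq_empty_of_lt h]

theorem hIcc_self (lam : ℕ → ℤ) (a : ℕ) : hIcc lam a a = lam a := by
  simp [hIcc]

theorem hIcc_pred_self (lam : ℕ → ℤ) {a : ℕ} (ha : 1 ≤ a) :
    hIcc lam (a - 1) a = lam (a - 1) + lam a := by
  obtain ⟨b, rfl⟩ : ∃ b, a = b + 1 := ⟨a - 1, by omega⟩
  rw [Nat.add_sub_cancel, hIcc, sum_Icc_succ_top (Nat.le_succ b), ← hIcc, hIcc_self]

theorem hIcc_sub (l1 l2 : ℕ → ℤ) (a b : ℕ) : hIcc (l1 - l2) a b = hIcc l1 a b - hIcc l2 a b :=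
  sum_sub_distrib ..

theorem hBeta_sub (n : ℕ) (l1 l2 : ℕ → ℤ) (i j : ℕ) :
    hBeta n (l1 - l2) i j = hBeta n l1 i j - hBeta n l2 i j := by
  simp only [hBeta, hIcc_sub, Pi.sub_apply]
  ring

theorem hIcc_eq_of_forall_eq_zero {lam : ℕ → ℤ} {a b c : ℕ} (hcb : c ≤ b)
    (hz : ∀ q, c < q → q ≤ b → lam q = 0) : hIcc lam a b = hIcc lam a c :=
  (sum_subset (Icc_subset_Icc_right hcb) fun q hq hqc => by
    simp only [mem_Icc] at hq hqc
    exact hz q (by omega) hq.2).symm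

theorem hBeta_eq_of_forall_eq_zero {n p : ℕ} {lam : ℕ → ℤ} (hpn : p + 2 ≤ n)
    (hz : ∀ q, p < q → q ≤ n → lam q = 0) (i j : ℕ) :
    hBeta n lam i j = hIcc lam i p + hIcc lam j p := by
  have hn : lam n = 0 := hz n (by omega) le_rfl
  have hi : hIcc lam i (n - 1) = hIcc lam i p :=
    hIcc_eq_of_forall_eq_zero (by omega) fun q hq _ => hz q hq (by omega)
  have hj : hIcc lam j (n - 2) = hIcc lam j p :=
    hIcc_eq_of_forall_eq_zero (by omega) fun q hq _ => hz q hq (by omega)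
  rw [hBeta, hi, hj, hn, add_zero]

namespace Interlacing

variable {n : ℕ} {l1 l2 : ℕ → ℤ} (h : Interlacing n l1 l2)
include h

theorem abs_sub_le_one {i : ℕ} (hi : 1 ≤ i) (hin : i ≤ n) : |(l1 - l2) i| ≤ 1 := by
  have := h.1 i hi hin
  rw [Pi.sub_apply, abs_le]
  omega

theorem sub_alternating {i j : ℕ} (hi : 1 ≤ i) (hij : i < j) (hjn : j < n)
    (hne : (l1 - l2) i ≠ 0) (heq : (l1 - l2) j = (l1 - l2) i) :
    ∃ s, i < s ∧ s < j ∧ (l1 - l2) s = -(l1 - l2) i := by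
  have hbi := h.1 i hi (by omega)
  have hbj := h.1 j (by omega) hjn.le
  simp only [Pi.sub_apply] at hne heq ⊢
  have hi1 : l1 i = 1 ∨ l2 i = 1 := by omega
  have hc := h.2.2.2 i j hi hij hjn.le (by omega)
  rcases hi1 with h1 | h2
  · have hj1 : l1 j = 1 := by omega
    obtain ⟨s, his, hsj, hs⟩ := hc.1 h1 hj1
    have := h.1 s (by omega) (by omega)
    refine ⟨s, his, hsj, ?_⟩
    omega
  · have hj2 : l2 j = 1 := by omega
    obtain ⟨s, his, hsj, hs⟩ := hc.2 h2 hj2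
    have := h.1 s (by omega) (by omega)
    refine ⟨s, his, hsj, ?_⟩
    omega

theorem abs_hIcc_sub_le_one {a b : ℕ} (ha : 1 ≤ a) (hbn : b < n) :
    |hIcc (l1 - l2) a b| ≤ 1 :=
  abs_sum_Icc_le_one_of_alternating _
    (fun s hs => h.abs_sub_le_one (by simp at hs; omega) (by simp at hs; omega))
    (fun _ _ hi hij hj => h.sub_alternating (by omega) hij (by omega))

end Interlacing

theorem betaCoeff_sub_betaCoeff {n p i j : ℕ} (hi : 1 ≤ i) (hij : i < j) (hip : i ≤ p - 2)
    (hjp : j ≤ p) (hpn : p ≤ n - 2) (k : ℕ) :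
    betaCoeff n i j k - betaCoeff n (p - 1) p k =
      alphaCoeff i (p - 2) k + alphaCoeff j (p - 1) k := by
  simp only [betaCoeff, alphaCoeff]
  split_ifs <;> omega

theorem stmt7_general (n : ℕ) (l1 l2 : ℕ → ℤ) (h : Interlacing n l1 l2)
    (p : ℕ) (hp2 : 2 ≤ p) (hpn : p ≤ n - 2)
    (hpval : l1 p + l2 p = 1)
    (hpmax : ∀ q, p < q → q ≤ n → l1 q + l2 q = 0)
    (hprev : l1 (p - 1) + l2 (p - 1) = 0) :
    |hBeta n l1 (p - 1) p - hBeta n l2 (p - 1) p| = 2 ∧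
      (∀ i j, 1 ≤ i → i < j → j ≤ n - 1 → p < j →
        |hBeta n l1 i j - hBeta n l2 i j| ≠ 2) ∧
      ∀ i j, 1 ≤ i → i < j → j ≤ n - 1 → i ≤ p - 2 → j ≤ p →
        |hBeta n l1 i j - hBeta n l2 i j| = 2 →
        ∀ k, betaCoeff n i j k - betaCoeff n (p - 1) p k =
          alphaCoeff i (p - 2) k + alphaCoeff j (p - 1) k := by
  have hvan : ∀ q, p < q → q ≤ n → (l1 - l2) q = 0 := fun q hpq hqn => by
    have := h.1 q (by omega) hqn
    have := hpmax q hpq hqn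
    simp only [Pi.sub_apply]
    omega
  have hbeta (i j : ℕ) :
      hBeta n l1 i j - hBeta n l2 i j = hIcc (l1 - l2) i p + hIcc (l1 - l2) j p := by
    rw [← hBeta_sub, hBeta_eq_of_forall_eq_zero (by omega) hvan]
  refine ⟨?_, fun i j hi _ _ hpj => ?_,
    fun i j hi hij _ hip hjp _ => betaCoeff_sub_betaCoeff hi hij hip hjp hpn⟩
  · have hprev' : (l1 - l2) (p - 1) = 0 := by
      have := h.1 (p - 1) (by omega) (by omega)
      simp only [Pi.sub_apply]
      omega
    have hp : |(l1 - l2) p| = 1 := by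
      have := h.1 p (by omega) (by omega)
      simp only [Pi.sub_apply]
      rw [abs_eq one_pos.le]
      omega
    rw [hbeta, hIcc_pred_self _ (by omega), hIcc_self, hprev', zero_add, ← two_mul,
      abs_mul, hp, abs_two, mul_one]
  · rw [hbeta, hIcc_of_lt (l1 - l2) hpj, add_zero]
    exact ((h.abs_hIcc_sub_le_one hi (by omega)).trans_lt one_lt_two).ne

/-- Case where both weights vanish on `{n-1,n}`, `p = max{i : (λ₁+λ₂)(h_i) = 1} ≤ n-2` and
`(λ₁+λ₂)(h_{p-1}) = 0`: then `β_{p-1,p} ∈ R(λ₁,λ₂)`, no `β_{i,j}` with `j > p` lies in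
`R(λ₁,λ₂)`, and for `β_{i,j} ∈ R(λ₁,λ₂)` with `i ≤ p-2`, `j ≤ p` one has
`β_{i,j} − β_{p-1,p} = α_{i,p-2} + α_{j,p-1}`. -/
theorem stmt7 (n : ℕ) (hn : 4 ≤ n) (l1 l2 : ℕ → ℤ) (h : Interlacing n l1 l2)
    (h1 : l1 (n - 1) + l1 n = 0) (h2 : l2 (n - 1) + l2 n = 0)
    (p : ℕ) (hp2 : 2 ≤ p) (hpn : p ≤ n - 2)
    (hpval : l1 p + l2 p = 1)
    (hpmax : ∀ q, p < q → q ≤ n → l1 q + l2 q = 0)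
    (hprev : l1 (p - 1) + l2 (p - 1) = 0) :
    |hBeta n l1 (p - 1) p - hBeta n l2 (p - 1) p| = 2 ∧
      (∀ i j, 1 ≤ i → i < j → j ≤ n - 1 → p < j →
        |hBeta n l1 i j - hBeta n l2 i j| ≠ 2) ∧
      ∀ i j, 1 ≤ i → i < j → j ≤ n - 1 → i ≤ p - 2 → j ≤ p →
        |hBeta n l1 i j - hBeta n l2 i j| = 2 →
        ∀ k, betaCoeff n i j k - betaCoeff n (p - 1) p k =
          alphaCoeff i (p - 2) k + alphaCoeff j (p - 1) k :=
  stmt7_general n l1 l2 h p hp2 hpn hpval hpmax hprev
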